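/- Let u : ℝ²∖{0} → ℂ satisfy Ku = u and Σ₂^c u = u (pointwise), and define v(x,y) = w(x,y)^{−1/2} · u(x,y), where w(x,y) = (x+iy)/|x+iy| and the principal branch of the complex square root is used (v = e^{−iθ/2} u for θ ∈ (−π,π)). Then on the slit plane ℝ² ∖ {(x,0) : x ≤ 0}, the function v is real-valued, conj(v(x,y)) = v(x,y), and symmetric with respect to the horizontal axis, v(x,−y) = v(x,y). -/

import Mathlib

noncomputable section

/-- The unimodular phase `w(x,y) = (x+iy)/|x+iy|` (that is, `e^{iθ}`). -/
def wphase (p : ℝ × ℝ) : ℂ :=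
  (p.1 + p.2 * Complex.I) / (‖((p.1 : ℂ) + p.2 * Complex.I)‖ : ℂ)

/-- The antilinear operator `K`: `(Ku)(x,y) = w(x,y) · conj(u(x,y))`,
i.e. `Ku = e^{iθ} ū` in polar coordinates. -/
def Kop (u : ℝ × ℝ → ℂ) : ℝ × ℝ → ℂ :=
  fun p => wphase p * (starRingEnd ℂ) (u p)

/-- The antilinear symmetry `Σ₂^c = ΓΣ₂`: `(Σ₂^c u)(x,y) = conj(u(x,−y))`. -/
def Sigma2c (u : ℝ × ℝ → ℂ) : ℝ × ℝ → ℂ :=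
  fun p => (starRingEnd ℂ) (u (p.1, -p.2))

/-!
Off the negative real axis `w = e^{iθ}` with `θ ∈ (-π, π)`, so the principal root
`s = w^{-1/2} = e^{-iθ/2}` satisfies `s̄ = s⁻¹` and `s² = w⁻¹`. Then `Ku = u` reads `ū = s² u`,
whence `v̄ = s̄ ū = s u = v`; and since `w(x,-y) = w̄(x,y)`, `Σ₂^c u = u` gives
`v(x,-y) = v̄(x,y) = v(x,y)`.
-/

open ComplexConjugate Real

theorem Complex.conj_cpow_ofReal_of_norm_eq_one {w : ℂ} (hw : ‖w‖ = 1) (harg : w.arg ≠ π)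
    (r : ℝ) : conj (w ^ (r : ℂ)) = (w ^ (r : ℂ))⁻¹ := by
  rw [← Complex.conj_ofReal r, ← Complex.conj_cpow w _ harg, ← Complex.inv_eq_conj hw,
    Complex.conj_ofReal, Complex.inv_cpow w _ harg]

theorem Complex.cpow_neg_half_mul_self {w : ℂ} (hw : w ≠ 0) :
    w ^ (-(1 / 2) : ℂ) * w ^ (-(1 / 2) : ℂ) = w⁻¹ := by
  rw [← Complex.cpow_add _ _ hw]
  norm_num [Complex.cpow_neg_one]

theorem wphase_eq_ofReal_mul (x y : ℝ) :
    wphase (x, y) = ((‖(x : ℂ) + y * Complex.I‖)⁻¹ : ℝ) * ((x : ℂ) + y * Complex.I) := by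
  rw [wphase]
  push_cast
  ring

theorem norm_wphase {p : ℝ × ℝ} (hp : p ≠ 0) : ‖wphase p‖ = 1 := by
  have hz : (p.1 : ℂ) + p.2 * Complex.I ≠ 0 := by
    contrapose! hp
    simpa [Complex.ext_iff, Prod.ext_iff] using hp
  rw [wphase, norm_div, Complex.norm_real, norm_norm, div_self (norm_ne_zero_iff.mpr hz)]

theorem wphase_ne_zero {p : ℝ × ℝ} (hp : p ≠ 0) : wphase p ≠ 0 :=
  norm_ne_zero_iff.mp (by rw [norm_wphase hp]; exact one_ne_zero)

theorem arg_wphase_ne_pi {x y : ℝ} (hxy : ¬(x ≤ 0 ∧ y = 0)) : (wphase (x, y)).arg ≠ π := by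
  have hz : (x : ℂ) + y * Complex.I ≠ 0 := by
    simpa [Complex.ext_iff] using fun hx hy => hxy ⟨hx.le, hy⟩
  rw [wphase_eq_ofReal_mul, Complex.arg_real_mul _ (by positivity), Ne, Complex.arg_eq_pi_iff]
  simpa using fun hx hy => hxy ⟨hx.le, hy⟩

theorem wphase_neg_snd (x y : ℝ) : wphase (x, -y) = conj (wphase (x, y)) := by
  have hconj : (x : ℂ) + ((-y : ℝ) : ℂ) * Complex.I = conj ((x : ℂ) + y * Complex.I) := by
    simp
  rw [wphase, wphase, hconj, Complex.norm_conj, map_div₀, Complex.conj_ofReal]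

theorem conj_eq_inv_wphase_mul_of_Kop_eq {u : ℝ × ℝ → ℂ} {p : ℝ × ℝ} (hp : p ≠ 0)
    (hKu : Kop u p = u p) : conj (u p) = (wphase p)⁻¹ * u p := by
  calc conj (u p) = (wphase p)⁻¹ * Kop u p := by
        rw [Kop, inv_mul_cancel_left₀ (wphase_ne_zero hp)]
    _ = (wphase p)⁻¹ * u p := by rw [hKu]

/-- Let `u` satisfy `Ku = u` and `Σ₂^c u = u` on `ℝ²∖{0}`, and set
`v(x,y) = w(x,y)^{−1/2}·u(x,y)` (principal branch of the complex square root,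
so `v = e^{−iθ/2}u` for `θ ∈ (−π,π)`). Then on the slit plane
`ℝ² ∖ {(x,0) : x ≤ 0}`, `v` is real-valued and symmetric with respect to the
horizontal axis: `conj(v(x,y)) = v(x,y)` and `v(x,−y) = v(x,y)`. -/
theorem slit_plane_real_symmetric (u : ℝ × ℝ → ℂ)
    (hKu : ∀ p : ℝ × ℝ, p ≠ 0 → Kop u p = u p)
    (hSu : ∀ p : ℝ × ℝ, p ≠ 0 → Sigma2c u p = u p)
    (v : ℝ × ℝ → ℂ) (hv : ∀ p : ℝ × ℝ, v p = wphase p ^ (-(1 / 2) : ℂ) * u p)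
    (x y : ℝ) (hxy : ¬ (x ≤ 0 ∧ y = 0)) :
    (starRingEnd ℂ) (v (x, y)) = v (x, y) ∧ v (x, -y) = v (x, y) := by
  have hp : ((x, y) : ℝ × ℝ) ≠ 0 := fun h => hxy ⟨(Prod.mk_eq_zero.mp h).1.le, (Prod.mk_eq_zero.mp h).2⟩
  set w := wphase (x, y)
  set s := w ^ (-(1 / 2) : ℂ)
  have hw : ‖w‖ = 1 := norm_wphase hp
  have hs : conj s = s⁻¹ := by
    have h := Complex.conj_cpow_ofReal_of_norm_eq_one hw (arg_wphase_ne_pi hxy) (-(1 / 2))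
    push_cast at h
    exact h
  have hs0 : s ≠ 0 := by simp [s, w, Complex.cpow_eq_zero_iff, wphase_ne_zero hp]
  have hu : conj (u (x, y)) = s * s * u (x, y) := by
    rw [conj_eq_inv_wphase_mul_of_Kop_eq hp (hKu _ hp),
      Complex.cpow_neg_half_mul_self (wphase_ne_zero hp)]
  have hreal : conj (v (x, y)) = v (x, y) := by
    calc conj (v (x, y)) = conj s * conj (u (x, y)) := by rw [hv, map_mul]
      _ = s⁻¹ * (s * s * u (x, y)) := by rw [hs, hu]
      _ = s * u (x, y) := by field_simp
      _ = v (x, y) := (hv _).symm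
  have hreflect : v (x, -y) = conj (v (x, y)) := by
    have hSu' : u (x, -y) = conj (u (x, y)) := by
      rw [← hSu _ hp, Sigma2c, Complex.conj_conj]
    rw [hv, hv, hSu', wphase_neg_snd, map_mul, ← Complex.inv_eq_conj hw,
      Complex.inv_cpow _ _ (arg_wphase_ne_pi hxy), ← hs]
  exact ⟨hreal, hreflect.trans hreal⟩

end
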